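/- Let X be a locally compact non-compact abelian group and let G, H, K be Banach X-modules over the group X. (i) If S ∈ C^u(Q;H,K) and T ∈ C^u(Q;G,H), then S∘T ∈ C^u(Q;G,K). (ii) If S ∈ C^u(Q;H,K) is bijective, then S⁻¹ ∈ C^u(Q;K,H). (iii) If S ∈ C^u(Q;H,K) and H and K are reflexive, then the Banach adjoint S* ∈ B(K*,H*) is of class C^u(Q;K*,H*), where the adjoint space of a reflexive Banach X-module over the group X carries the representation k ↦ (V_{−k})*. -/

import Mathlib

/-!
Write `conj S k = V_k⁻¹ S V_k`. Conjugation is multiplicative, `conj (S T) = conj S ∘ conj T`,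
and `conj id = id`. Hence (i) is continuity of composition of operators, and in (ii)
`conj S⁻¹ k` is the inverse of `conj S k`, so continuity follows from that of operator inversion
on a Banach space. For (iii), `D ↦ D*` is contravariant, turns `V_k* S* V_{k⁻¹}*` into
`(conj S k)*`, and is 1-Lipschitz for the operator norm.
-/

open ContinuousLinearMap

noncomputable section

/-- The space of continuous antilinear forms on `G` (the "adjoint space" `G*`). -/
abbrev AntiDual (G : Type*) [NormedAddCommGroup G] [NormedSpace ℂ G] : Type _ :=
  G →SL[starRingEnd ℂ] ℂ

/-- Precomposition with `D : G →L E`, as a map `E* →L G*`; this is the adjoint `D*`. -/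
def precompAntiDual {G E : Type*} [NormedAddCommGroup G] [NormedSpace ℂ G]
    [NormedAddCommGroup E] [NormedSpace ℂ E] (D : G →L[ℂ] E) :
    AntiDual E →L[ℂ] AntiDual G :=
  LinearMap.mkContinuous
    { toFun := fun w => w.comp D
      map_add' := fun w₁ w₂ => by ext u; simp
      map_smul' := fun c w => by ext u; simp }
    ‖D‖ (fun w => by
      calc ‖w.comp D‖ ≤ ‖w‖ * ‖D‖ := opNorm_comp_le _ _
      _ = ‖D‖ * ‖w‖ := mul_comm _ _)

/-- Auxiliary: the element of the double antidual associated to `u`. -/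
def doubleAntiDualAux {H : Type*} [NormedAddCommGroup H] [NormedSpace ℂ H] (u : H) :
    AntiDual (AntiDual H) :=
  LinearMap.mkContinuous
    { toFun := fun w : AntiDual H => starRingEnd ℂ (w u)
      map_add' := fun w₁ w₂ => by simp
      map_smul' := fun c w => by simp }
    ‖u‖ (fun w => by
      simp only [LinearMap.coe_mk, AddHom.coe_mk]
      calc ‖starRingEnd ℂ (w u)‖ = ‖w u‖ := by simp
      _ ≤ ‖w‖ * ‖u‖ := w.le_opNorm u
      _ = ‖u‖ * ‖w‖ := mul_comm _ _)

theorem doubleAntiDualAux_norm_le {H : Type*} [NormedAddCommGroup H] [NormedSpace ℂ H]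
    (u : H) : ‖doubleAntiDualAux u‖ ≤ ‖u‖ :=
  LinearMap.mkContinuous_norm_le _ (norm_nonneg u) _

/-- The canonical embedding of `H` into its double antidual `H**`,
`⟨v, u⟩ = conj ⟨u, v⟩`. -/
def doubleAntiDualEmb (H : Type*) [NormedAddCommGroup H] [NormedSpace ℂ H] :
    H →L[ℂ] AntiDual (AntiDual H) :=
  LinearMap.mkContinuous
    { toFun := fun u => doubleAntiDualAux u
      map_add' := fun u₁ u₂ => by ext w; simp [doubleAntiDualAux]
      map_smul' := fun c u => by ext w; simp [doubleAntiDualAux] }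
    1 (fun u => by simpa using doubleAntiDualAux_norm_le u)

/-- A Banach `X`-module over the group `X`: a strongly continuous representation of the
dual group by bounded invertible operators. -/
structure GroupRep (Xd : Type*) [Monoid Xd] [TopologicalSpace Xd]
    (H : Type*) [NormedAddCommGroup H] [NormedSpace ℂ H] where
  V : Xd →* (H →L[ℂ] H)ˣ
  strong_cont : ∀ u : H, Continuous fun k : Xd => (↑(V k) : H →L[ℂ] H) u

/-- The regularity class `C^u(Q; H, K)`: norm continuity of `k ↦ V_k⁻¹ S V_k`. -/
def CuClass {Xd : Type*} [Monoid Xd] [TopologicalSpace Xd]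
    {H K : Type*} [NormedAddCommGroup H] [NormedSpace ℂ H]
    [NormedAddCommGroup K] [NormedSpace ℂ K]
    (WH : GroupRep Xd H) (WK : GroupRep Xd K) (S : H →L[ℂ] K) : Prop :=
  Continuous fun k : Xd =>
    (↑(WK.V k)⁻¹ : K →L[ℂ] K).comp (S.comp (↑(WH.V k) : H →L[ℂ] H))

theorem Continuous.clm_inverse {𝕜 Y E F : Type*} [NontriviallyNormedField 𝕜]
    [NormedAddCommGroup E] [NormedSpace 𝕜 E] [CompleteSpace E]
    [NormedAddCommGroup F] [NormedSpace 𝕜 F] [TopologicalSpace Y]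
    {f : Y → E →L[𝕜] F} {g : Y → F →L[𝕜] E} (hf : Continuous f)
    (hfg : ∀ y, (f y).comp (g y) = .id 𝕜 F) (hgf : ∀ y, (g y).comp (f y) = .id 𝕜 E) :
    Continuous g := by
  let e y : E ≃L[𝕜] F := .equivOfInverse' (f y) (g y) (hfg y) (hgf y)
  have hg : g = fun y => inverse (e y : E →L[𝕜] F) :=
    funext fun y => (inverse_equiv (e y)).symm
  rw [hg, continuous_iff_continuousAt]
  intro y
  have hinv : ContinuousAt inverse (f y) := (contDiffAt_map_inverse (n := 0) (e y)).continuousAt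
  exact hinv.comp hf.continuousAt

namespace GroupRep

variable {Xd : Type*} [Monoid Xd] [TopologicalSpace Xd]
  {G H K : Type*} [NormedAddCommGroup G] [NormedSpace ℂ G]
  [NormedAddCommGroup H] [NormedSpace ℂ H] [NormedAddCommGroup K] [NormedSpace ℂ K]

theorem apply_inv_apply (W : GroupRep Xd H) (k : Xd) (v : H) :
    (↑(W.V k) : H →L[ℂ] H) ((↑(W.V k)⁻¹ : H →L[ℂ] H) v) = v :=
  DFunLike.congr_fun (W.V k).mul_inv v

theorem inv_apply_apply (W : GroupRep Xd H) (k : Xd) (v : H) :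
    (↑(W.V k)⁻¹ : H →L[ℂ] H) ((↑(W.V k) : H →L[ℂ] H) v) = v :=
  DFunLike.congr_fun (W.V k).inv_mul v

def conj (WH : GroupRep Xd H) (WK : GroupRep Xd K) (S : H →L[ℂ] K) (k : Xd) : H →L[ℂ] K :=
  (↑(WK.V k)⁻¹ : K →L[ℂ] K).comp (S.comp (↑(WH.V k) : H →L[ℂ] H))

theorem conj_comp (WG : GroupRep Xd G) (WH : GroupRep Xd H) (WK : GroupRep Xd K)
    (S : H →L[ℂ] K) (T : G →L[ℂ] H) (k : Xd) :
    conj WG WK (S.comp T) k = (conj WH WK S k).comp (conj WG WH T k) := by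
  ext v
  simp [conj, apply_inv_apply]

theorem conj_id (WH : GroupRep Xd H) (k : Xd) : conj WH WH (.id ℂ H) k = .id ℂ H := by
  ext v
  simp [conj, inv_apply_apply]

end GroupRep

open GroupRep

section CuClass

variable {Xd : Type*} [Monoid Xd] [TopologicalSpace Xd]
  {G H K : Type*} [NormedAddCommGroup G] [NormedSpace ℂ G]
  [NormedAddCommGroup H] [NormedSpace ℂ H] [NormedAddCommGroup K] [NormedSpace ℂ K]
  {WG : GroupRep Xd G} {WH : GroupRep Xd H} {WK : GroupRep Xd K}

theorem cuClass_iff_continuous_conj {S : H →L[ℂ] K} :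
    CuClass WH WK S ↔ Continuous (conj WH WK S) := Iff.rfl

theorem CuClass.comp {S : H →L[ℂ] K} {T : G →L[ℂ] H} (hS : CuClass WH WK S)
    (hT : CuClass WG WH T) : CuClass WG WK (S.comp T) := by
  rw [cuClass_iff_continuous_conj, funext (conj_comp WG WH WK S T)]
  exact hS.clm_comp hT

theorem CuClass.inverse [CompleteSpace H] {S : H →L[ℂ] K} {Sinv : K →L[ℂ] H}
    (hleft : ∀ u, Sinv (S u) = u) (hright : ∀ w, S (Sinv w) = w) (hS : CuClass WH WK S) :
    CuClass WK WH Sinv := by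
  have hSSinv : S.comp Sinv = .id ℂ K := ext hright
  have hSinvS : Sinv.comp S = .id ℂ H := ext hleft
  refine Continuous.clm_inverse (f := conj WH WK S) (g := conj WK WH Sinv) hS
    (fun k => ?_) (fun k => ?_)
  · rw [← conj_comp, hSSinv, conj_id]
  · rw [← conj_comp, hSinvS, conj_id]

end CuClass

section PrecompAntiDual

variable {G E F : Type*} [NormedAddCommGroup G] [NormedSpace ℂ G]
  [NormedAddCommGroup E] [NormedSpace ℂ E] [NormedAddCommGroup F] [NormedSpace ℂ F]

theorem precompAntiDual_comp (A : E →L[ℂ] F) (B : G →L[ℂ] E) :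
    precompAntiDual (A.comp B) = (precompAntiDual B).comp (precompAntiDual A) :=
  rfl

theorem precompAntiDual_sub (D₁ D₂ : G →L[ℂ] E) :
    precompAntiDual (D₁ - D₂) = precompAntiDual D₁ - precompAntiDual D₂ := by
  ext w u
  simp [precompAntiDual]

theorem lipschitzWith_precompAntiDual :
    LipschitzWith 1 (precompAntiDual : (G →L[ℂ] E) → AntiDual E →L[ℂ] AntiDual G) :=
  LipschitzWith.of_dist_le_mul fun D₁ D₂ => by
    rw [dist_eq_norm, dist_eq_norm, ← precompAntiDual_sub, NNReal.coe_one, one_mul]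
    exact LinearMap.mkContinuous_norm_le _ (norm_nonneg _) _

end PrecompAntiDual

theorem CuClass.continuous_precompAntiDual_conj {Xd : Type*} [Group Xd] [TopologicalSpace Xd]
    {H K : Type*} [NormedAddCommGroup H] [NormedSpace ℂ H]
    [NormedAddCommGroup K] [NormedSpace ℂ K]
    {WH : GroupRep Xd H} {WK : GroupRep Xd K} {S : H →L[ℂ] K} (hS : CuClass WH WK S) :
    Continuous fun k : Xd =>
      (precompAntiDual (↑(WH.V k) : H →L[ℂ] H)).comp
        ((precompAntiDual S).comp (precompAntiDual (↑(WK.V k⁻¹) : K →L[ℂ] K))) := by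
  have hconj : ∀ k, (precompAntiDual (↑(WH.V k) : H →L[ℂ] H)).comp
      ((precompAntiDual S).comp (precompAntiDual (↑(WK.V k⁻¹) : K →L[ℂ] K))) =
      precompAntiDual (conj WH WK S k) := by
    intro k
    rw [conj, precompAntiDual_comp, precompAntiDual_comp, map_inv]
    rfl
  simp_rw [hconj]
  exact lipschitzWith_precompAntiDual.continuous.comp hS

theorem stmt7_general {X : Type*} [TopologicalSpace X] [CommGroup X]
    {G H K : Type*} [NormedAddCommGroup G] [NormedSpace ℂ G]
    [NormedAddCommGroup H] [NormedSpace ℂ H] [CompleteSpace H]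
    [NormedAddCommGroup K] [NormedSpace ℂ K]
    (WG : GroupRep (PontryaginDual X) G) (WH : GroupRep (PontryaginDual X) H)
    (WK : GroupRep (PontryaginDual X) K) :
    -- (i) composition:
    (∀ (S : H →L[ℂ] K) (T : G →L[ℂ] H),
      CuClass WH WK S → CuClass WG WH T → CuClass WG WK (S.comp T)) ∧
    -- (ii) inversion:
    (∀ (S : H →L[ℂ] K) (Sinv : K →L[ℂ] H), Function.Bijective ⇑S →
      (∀ u : H, Sinv (S u) = u) → (∀ w : K, S (Sinv w) = w) →
      CuClass WH WK S → CuClass WK WH Sinv) ∧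
    -- (iii) adjoints, for reflexive modules:
    (∀ S : H →L[ℂ] K,
      Function.Surjective ⇑(doubleAntiDualEmb H) → Function.Surjective ⇑(doubleAntiDualEmb K) →
      CuClass WH WK S →
      Continuous fun k : PontryaginDual X =>
        (precompAntiDual (↑(WH.V k) : H →L[ℂ] H)).comp
          ((precompAntiDual S).comp
            (precompAntiDual (↑(WK.V k⁻¹) : K →L[ℂ] K)))) :=
  ⟨fun _ _ hS hT => hS.comp hT,
    fun _ _ _ hleft hright hS => hS.inverse hleft hright,
    fun _ _ _ hS => hS.continuous_precompAntiDual_conj⟩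

/-- Stability of the class `C^u(Q)` of regular operators between Banach
`X`-modules over a locally compact non-compact abelian group `X` under composition,
inversion, and (for reflexive modules) adjoints.  Here the dual group is
`PontryaginDual X` and the adjoint space of a module carries the representation
`k ↦ (V_{k⁻¹})*`. -/
theorem stmt7 {X : Type*} [TopologicalSpace X] [CommGroup X] [IsTopologicalGroup X]
    [LocallyCompactSpace X] [T2Space X] [NoncompactSpace X]
    {G H K : Type*} [NormedAddCommGroup G] [NormedSpace ℂ G] [CompleteSpace G]
    [NormedAddCommGroup H] [NormedSpace ℂ H] [CompleteSpace H]
    [NormedAddCommGroup K] [NormedSpace ℂ K] [CompleteSpace K]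
    (WG : GroupRep (PontryaginDual X) G) (WH : GroupRep (PontryaginDual X) H)
    (WK : GroupRep (PontryaginDual X) K) :
    -- (i) composition:
    (∀ (S : H →L[ℂ] K) (T : G →L[ℂ] H),
      CuClass WH WK S → CuClass WG WH T → CuClass WG WK (S.comp T)) ∧
    -- (ii) inversion:
    (∀ (S : H →L[ℂ] K) (Sinv : K →L[ℂ] H), Function.Bijective ⇑S →
      (∀ u : H, Sinv (S u) = u) → (∀ w : K, S (Sinv w) = w) →
      CuClass WH WK S → CuClass WK WH Sinv) ∧
    -- (iii) adjoints, for reflexive modules: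
    (∀ S : H →L[ℂ] K,
      Function.Surjective ⇑(doubleAntiDualEmb H) → Function.Surjective ⇑(doubleAntiDualEmb K) →
      CuClass WH WK S →
      Continuous fun k : PontryaginDual X =>
        (precompAntiDual (↑(WH.V k) : H →L[ℂ] H)).comp
          ((precompAntiDual S).comp
            (precompAntiDual (↑(WK.V k⁻¹) : K →L[ℂ] K)))) :=
  stmt7_general WG WH WK

end
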